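/- For all î, ĵ ∈ {3, …, n+2} and all x ∈ ℝ^{n+4}, the Christoffel symbols of the metric G satisfy Γ^î_{ĵ, n+4}(x) = Σ_{α=1}^{N} (A_α)_{î−2, ĵ−2} (x^{n+3})^α and Γ^î_{n+3, n+3}(x) = Γ^î_{n+4, n+4}(x) = −x^î. -/

import Mathlib

namespace HolPaper

open Matrix

/-- Points of `ℝ^{n+4}`, with coordinates indexed by `Fin (n+4)`.
The paper's index `1` is `p1`, `2` is `p2`, `î ∈ {3,…,n+2}` is `ehat i` for `i : Fin n`,
`n+3` is `q1` and `n+4` is `q2`. -/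
abbrev Pt (n : ℕ) := Fin (n + 4) → ℝ

def p1 (n : ℕ) : Fin (n + 4) := ⟨0, by omega⟩
def p2 (n : ℕ) : Fin (n + 4) := ⟨1, by omega⟩
def ehat {n : ℕ} (i : Fin n) : Fin (n + 4) := ⟨i.1 + 2, by have := i.isLt; omega⟩
def q1 (n : ℕ) : Fin (n + 4) := ⟨n + 2, by omega⟩
def q2 (n : ℕ) : Fin (n + 4) := ⟨n + 3, by omega⟩

noncomputable section

variable {n N : ℕ}

/-- `u^î(x) = Σ_ĵ Σ_α (A_α)_{î-2,ĵ-2} x^ĵ (x^{n+3})^α`. -/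
def u (A : Fin N → Matrix (Fin n) (Fin n) ℝ) (i : Fin n) (x : Pt n) : ℝ :=
  ∑ j : Fin n, ∑ α : Fin N, A α i j * x (ehat j) * x (q1 n) ^ (α.1 + 1)

/-- `F(x) = Σ_î (x^î)²`. -/
def Fq (n : ℕ) (x : Pt n) : ℝ := ∑ i : Fin n, x (ehat i) ^ 2

/-- The Gram matrix `G(x)` of the metric. -/
def Gmet (A : Fin N → Matrix (Fin n) (Fin n) ℝ) (x : Pt n) :
    Matrix (Fin (n + 4)) (Fin (n + 4)) ℝ := fun a b =>
  (if (a = p1 n ∧ b = q1 n) ∨ (a = q1 n ∧ b = p1 n) then (1 : ℝ) else 0)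
  + (if (a = p2 n ∧ b = q2 n) ∨ (a = q2 n ∧ b = p2 n) then (1 : ℝ) else 0)
  + (∑ i : Fin n, if a = ehat i ∧ b = ehat i then (1 : ℝ) else 0)
  + (∑ i : Fin n, if (a = ehat i ∧ b = q2 n) ∨ (a = q2 n ∧ b = ehat i) then u A i x else 0)
  + (if (a = q1 n ∧ b = q1 n) ∨ (a = q2 n ∧ b = q2 n) then Fq n x else 0)

/-- Partial derivative `∂_b f` of a function on `ℝ^{n+4}`. -/
def pd (b : Fin (n + 4)) (f : Pt n → ℝ) (x : Pt n) : ℝ :=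
  fderiv ℝ f x (Pi.single b 1)

/-- Christoffel symbols
`Γ^a_{bc} = ½ Σ_d G^{ad} (∂_b G_{dc} + ∂_c G_{bd} − ∂_d G_{bc})`. -/
def Γchr (A : Fin N → Matrix (Fin n) (Fin n) ℝ) (a b c : Fin (n + 4)) (x : Pt n) : ℝ :=
  (1 / 2) * ∑ d : Fin (n + 4), (Gmet A x)⁻¹ a d *
    (pd b (fun y => Gmet A y d c) x + pd c (fun y => Gmet A y b d) x
      - pd d (fun y => Gmet A y b c) x)

/-- Curvature components
`R^a_{b,c,d} = ∂_c Γ^a_{db} − ∂_d Γ^a_{cb} + Σ_e (Γ^a_{ce} Γ^e_{db} − Γ^a_{de} Γ^e_{cb})`. -/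
def Rcurv (A : Fin N → Matrix (Fin n) (Fin n) ℝ) (a b c d : Fin (n + 4)) (x : Pt n) : ℝ :=
  pd c (Γchr A a d b) x - pd d (Γchr A a c b) x
  + ∑ e : Fin (n + 4), (Γchr A a c e x * Γchr A e d b x - Γchr A a d e x * Γchr A e c b x)

/-- Auxiliary recursion for iterated covariant derivatives of the curvature; the list of
differentiation indices is stored in *reverse* order (most recent derivative first). -/
def covRAux (A : Fin N → Matrix (Fin n) (Fin n) ℝ) :
    Fin (n + 4) → Fin (n + 4) → Fin (n + 4) → Fin (n + 4) → List (Fin (n + 4)) → Pt n → ℝ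
  | a, b, c, d, [], x => Rcurv A a b c d x
  | a, b, c, d, f :: fs, x =>
      pd f (covRAux A a b c d fs) x
      + ∑ l : Fin (n + 4), Γchr A a f l x * covRAux A l b c d fs x
      - ∑ l : Fin (n + 4), Γchr A l f b x * covRAux A a l c d fs x
      - ∑ l : Fin (n + 4), Γchr A l f c x * covRAux A a b l d fs x
      - ∑ l : Fin (n + 4), Γchr A l f d x * covRAux A a b c l fs x
      - ∑ s : Fin fs.length, ∑ l : Fin (n + 4),
          Γchr A l f (fs.get s) x * covRAux A a b c d (fs.set s l) x
  termination_by a b c d fs => fs.length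
  decreasing_by all_goals simp [List.length_set]

/-- `covR A a b c d [f_1, …, f_r] x` is the component `R^a_{b,c,d;f_1;…;f_r}(x)` of the
`r`-th covariant derivative of the curvature tensor (indices in natural order). -/
def covR (A : Fin N → Matrix (Fin n) (Fin n) ℝ) (a b c d : Fin (n + 4))
    (fs : List (Fin (n + 4))) (x : Pt n) : ℝ :=
  covRAux A a b c d fs.reverse x



/-! ### Auxiliary lemmas -/

section Aux

variable (A : Fin N → Matrix (Fin n) (Fin n) ℝ)

@[simp] lemma p1_ne_p2 : p1 n ≠ p2 n := by simp [p1, p2, Fin.ext_iff]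
@[simp] lemma p2_ne_p1 : p2 n ≠ p1 n := by simp [p1, p2, Fin.ext_iff]
@[simp] lemma p1_ne_q1 : p1 n ≠ q1 n := by simp [p1, q1, Fin.ext_iff]
@[simp] lemma q1_ne_p1 : q1 n ≠ p1 n := by simp [p1, q1, Fin.ext_iff]
@[simp] lemma p1_ne_q2 : p1 n ≠ q2 n := by simp [p1, q2, Fin.ext_iff]
@[simp] lemma q2_ne_p1 : q2 n ≠ p1 n := by simp [p1, q2, Fin.ext_iff]
@[simp] lemma p2_ne_q1 : p2 n ≠ q1 n := by simp [p2, q1, Fin.ext_iff]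
@[simp] lemma q1_ne_p2 : q1 n ≠ p2 n := by simp [p2, q1, Fin.ext_iff]
@[simp] lemma p2_ne_q2 : p2 n ≠ q2 n := by simp [p2, q2, Fin.ext_iff]
@[simp] lemma q2_ne_p2 : q2 n ≠ p2 n := by simp [p2, q2, Fin.ext_iff]
@[simp] lemma q1_ne_q2 : q1 n ≠ q2 n := by simp [q1, q2, Fin.ext_iff]
@[simp] lemma q2_ne_q1 : q2 n ≠ q1 n := by simp [q1, q2, Fin.ext_iff]
@[simp] lemma ehat_ne_p1 (i : Fin n) : ehat i ≠ p1 n := by simp [ehat, p1, Fin.ext_iff]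
@[simp] lemma p1_ne_ehat (i : Fin n) : p1 n ≠ ehat i := by simp [ehat, p1, Fin.ext_iff]
@[simp] lemma ehat_ne_p2 (i : Fin n) : ehat i ≠ p2 n := by simp [ehat, p2, Fin.ext_iff]
@[simp] lemma p2_ne_ehat (i : Fin n) : p2 n ≠ ehat i := by simp [ehat, p2, Fin.ext_iff]
@[simp] lemma ehat_ne_q1 (i : Fin n) : ehat i ≠ q1 n := by
  have := i.isLt; simp [ehat, q1, Fin.ext_iff]; omega
@[simp] lemma q1_ne_ehat (i : Fin n) : q1 n ≠ ehat i := (ehat_ne_q1 i).symm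
@[simp] lemma ehat_ne_q2 (i : Fin n) : ehat i ≠ q2 n := by
  have := i.isLt; simp [ehat, q2, Fin.ext_iff]; omega
@[simp] lemma q2_ne_ehat (i : Fin n) : q2 n ≠ ehat i := (ehat_ne_q2 i).symm
@[simp] lemma ehat_inj {i j : Fin n} : ehat i = ehat j ↔ i = j := by
  simp [ehat, Fin.ext_iff]

lemma cases5 (a : Fin (n + 4)) :
    a = p1 n ∨ a = p2 n ∨ (∃ i : Fin n, a = ehat i) ∨ a = q1 n ∨ a = q2 n := by
  rcases a with ⟨v, hv⟩
  by_cases h0 : v = 0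
  · exact Or.inl (by simp [p1, Fin.ext_iff, h0])
  by_cases h1 : v = 1
  · exact Or.inr (Or.inl (by simp [p2, Fin.ext_iff, h1]))
  by_cases h2 : v = n + 2
  · exact Or.inr (Or.inr (Or.inr (Or.inl (by simp [q1, Fin.ext_iff, h2]))))
  by_cases h3 : v = n + 3
  · exact Or.inr (Or.inr (Or.inr (Or.inr (by simp [q2, Fin.ext_iff, h3]))))
  · refine Or.inr (Or.inr (Or.inl ⟨⟨v - 2, by omega⟩, ?_⟩))
    simp [ehat, Fin.ext_iff]; omega

lemma sum_decomp (f : Fin (n + 4) → ℝ) :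
    ∑ d : Fin (n + 4), f d
      = f (p1 n) + f (p2 n) + (∑ i : Fin n, f (ehat i)) + f (q1 n) + f (q2 n) := by
  have huniv : (Finset.univ : Finset (Fin (n + 4)))
      = insert (p1 n) (insert (p2 n) (insert (q1 n) (insert (q2 n)
          (Finset.image ehat Finset.univ)))) := by
    ext a
    simp only [Finset.mem_univ, Finset.mem_insert, Finset.mem_image, true_iff]
    rcases cases5 a with h | h | ⟨i, h⟩ | h | h
    · exact Or.inl h
    · exact Or.inr (Or.inl h)
    · exact Or.inr (Or.inr (Or.inr (Or.inr ⟨i, by simp, h.symm⟩)))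
    · exact Or.inr (Or.inr (Or.inl h))
    · exact Or.inr (Or.inr (Or.inr (Or.inl h)))
  rw [huniv]
  rw [Finset.sum_insert (by simp), Finset.sum_insert (by simp),
    Finset.sum_insert (by simp), Finset.sum_insert (by simp),
    Finset.sum_image (fun i _ j _ h => ehat_inj.mp h)]
  ring

/-! #### Entries of `Gmet` -/

variable {A} (y : Pt n)

@[simp] lemma Gmet_p1_p1 : Gmet A y (p1 n) (p1 n) = 0 := by simp [Gmet]
@[simp] lemma Gmet_p1_p2 : Gmet A y (p1 n) (p2 n) = 0 := by simp [Gmet]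
@[simp] lemma Gmet_p1_ehat (j : Fin n) : Gmet A y (p1 n) (ehat j) = 0 := by simp [Gmet]
@[simp] lemma Gmet_p1_q1 : Gmet A y (p1 n) (q1 n) = 1 := by simp [Gmet]
@[simp] lemma Gmet_p1_q2 : Gmet A y (p1 n) (q2 n) = 0 := by simp [Gmet]
@[simp] lemma Gmet_p2_p1 : Gmet A y (p2 n) (p1 n) = 0 := by simp [Gmet]
@[simp] lemma Gmet_p2_p2 : Gmet A y (p2 n) (p2 n) = 0 := by simp [Gmet]
@[simp] lemma Gmet_p2_ehat (j : Fin n) : Gmet A y (p2 n) (ehat j) = 0 := by simp [Gmet]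
@[simp] lemma Gmet_p2_q1 : Gmet A y (p2 n) (q1 n) = 0 := by simp [Gmet]
@[simp] lemma Gmet_p2_q2 : Gmet A y (p2 n) (q2 n) = 1 := by simp [Gmet]
@[simp] lemma Gmet_ehat_p1 (i : Fin n) : Gmet A y (ehat i) (p1 n) = 0 := by simp [Gmet]
@[simp] lemma Gmet_ehat_p2 (i : Fin n) : Gmet A y (ehat i) (p2 n) = 0 := by simp [Gmet]
@[simp] lemma Gmet_ehat_ehat (i j : Fin n) :
    Gmet A y (ehat i) (ehat j) = if i = j then 1 else 0 := by
  by_cases h : i = j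
  · subst h; simp [Gmet, ehat_inj]
  · simp [Gmet, ehat_inj, ite_and, h, Ne.symm h]
@[simp] lemma Gmet_ehat_q1 (i : Fin n) : Gmet A y (ehat i) (q1 n) = 0 := by simp [Gmet]
@[simp] lemma Gmet_ehat_q2 (i : Fin n) : Gmet A y (ehat i) (q2 n) = u A i y := by
  simp [Gmet, ehat_inj]
@[simp] lemma Gmet_q1_p1 : Gmet A y (q1 n) (p1 n) = 1 := by simp [Gmet]
@[simp] lemma Gmet_q1_p2 : Gmet A y (q1 n) (p2 n) = 0 := by simp [Gmet]
@[simp] lemma Gmet_q1_ehat (j : Fin n) : Gmet A y (q1 n) (ehat j) = 0 := by simp [Gmet]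
@[simp] lemma Gmet_q1_q1 : Gmet A y (q1 n) (q1 n) = Fq n y := by simp [Gmet]
@[simp] lemma Gmet_q1_q2 : Gmet A y (q1 n) (q2 n) = 0 := by simp [Gmet]
@[simp] lemma Gmet_q2_p1 : Gmet A y (q2 n) (p1 n) = 0 := by simp [Gmet]
@[simp] lemma Gmet_q2_p2 : Gmet A y (q2 n) (p2 n) = 1 := by simp [Gmet]
@[simp] lemma Gmet_q2_ehat (j : Fin n) : Gmet A y (q2 n) (ehat j) = u A j y := by
  simp [Gmet, ehat_inj]
@[simp] lemma Gmet_q2_q1 : Gmet A y (q2 n) (q1 n) = 0 := by simp [Gmet]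
@[simp] lemma Gmet_q2_q2 : Gmet A y (q2 n) (q2 n) = Fq n y := by simp [Gmet]

variable (A)

/-- The inverse of the metric. -/
def Ginv (x : Pt n) : Matrix (Fin (n + 4)) (Fin (n + 4)) ℝ := fun a b =>
  (if a = p1 n ∧ b = p1 n then -(Fq n x) else 0)
  + (if (a = p1 n ∧ b = q1 n) ∨ (a = q1 n ∧ b = p1 n) then (1 : ℝ) else 0)
  + (if a = p2 n ∧ b = p2 n then (∑ j : Fin n, (u A j x) ^ 2) - Fq n x else 0)
  + (if (a = p2 n ∧ b = q2 n) ∨ (a = q2 n ∧ b = p2 n) then (1 : ℝ) else 0)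
  + (∑ i : Fin n, if (a = ehat i ∧ b = p2 n) ∨ (a = p2 n ∧ b = ehat i) then -(u A i x) else 0)
  + (∑ i : Fin n, if a = ehat i ∧ b = ehat i then (1 : ℝ) else 0)

variable {A} (x : Pt n)

@[simp] lemma Ginv_p1_p1 : Ginv A x (p1 n) (p1 n) = -(Fq n x) := by simp [Ginv]
@[simp] lemma Ginv_p1_p2 : Ginv A x (p1 n) (p2 n) = 0 := by simp [Ginv]
@[simp] lemma Ginv_p1_ehat (j : Fin n) : Ginv A x (p1 n) (ehat j) = 0 := by simp [Ginv]
@[simp] lemma Ginv_p1_q1 : Ginv A x (p1 n) (q1 n) = 1 := by simp [Ginv]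
@[simp] lemma Ginv_p1_q2 : Ginv A x (p1 n) (q2 n) = 0 := by simp [Ginv]
@[simp] lemma Ginv_p2_p1 : Ginv A x (p2 n) (p1 n) = 0 := by simp [Ginv]
@[simp] lemma Ginv_p2_p2 :
    Ginv A x (p2 n) (p2 n) = (∑ j : Fin n, (u A j x) ^ 2) - Fq n x := by simp [Ginv]
@[simp] lemma Ginv_p2_ehat (j : Fin n) : Ginv A x (p2 n) (ehat j) = -(u A j x) := by
  simp [Ginv, ehat_inj]
@[simp] lemma Ginv_p2_q1 : Ginv A x (p2 n) (q1 n) = 0 := by simp [Ginv]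
@[simp] lemma Ginv_p2_q2 : Ginv A x (p2 n) (q2 n) = 1 := by simp [Ginv]
@[simp] lemma Ginv_ehat_p1 (i : Fin n) : Ginv A x (ehat i) (p1 n) = 0 := by simp [Ginv]
@[simp] lemma Ginv_ehat_p2 (i : Fin n) : Ginv A x (ehat i) (p2 n) = -(u A i x) := by
  simp [Ginv, ehat_inj]
@[simp] lemma Ginv_ehat_ehat (i j : Fin n) :
    Ginv A x (ehat i) (ehat j) = if i = j then 1 else 0 := by
  by_cases h : i = j
  · subst h; simp [Ginv, ehat_inj]
  · simp [Ginv, ehat_inj, ite_and, h, Ne.symm h]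
@[simp] lemma Ginv_ehat_q1 (i : Fin n) : Ginv A x (ehat i) (q1 n) = 0 := by simp [Ginv]
@[simp] lemma Ginv_ehat_q2 (i : Fin n) : Ginv A x (ehat i) (q2 n) = 0 := by simp [Ginv]
@[simp] lemma Ginv_q1_p1 : Ginv A x (q1 n) (p1 n) = 1 := by simp [Ginv]
@[simp] lemma Ginv_q1_p2 : Ginv A x (q1 n) (p2 n) = 0 := by simp [Ginv]
@[simp] lemma Ginv_q1_ehat (j : Fin n) : Ginv A x (q1 n) (ehat j) = 0 := by simp [Ginv]
@[simp] lemma Ginv_q1_q1 : Ginv A x (q1 n) (q1 n) = 0 := by simp [Ginv]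
@[simp] lemma Ginv_q1_q2 : Ginv A x (q1 n) (q2 n) = 0 := by simp [Ginv]
@[simp] lemma Ginv_q2_p1 : Ginv A x (q2 n) (p1 n) = 0 := by simp [Ginv]
@[simp] lemma Ginv_q2_p2 : Ginv A x (q2 n) (p2 n) = 1 := by simp [Ginv]
@[simp] lemma Ginv_q2_ehat (j : Fin n) : Ginv A x (q2 n) (ehat j) = 0 := by simp [Ginv]
@[simp] lemma Ginv_q2_q1 : Ginv A x (q2 n) (q1 n) = 0 := by simp [Ginv]
@[simp] lemma Ginv_q2_q2 : Ginv A x (q2 n) (q2 n) = 0 := by simp [Ginv]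

variable (A)

lemma Gmet_mul_Ginv (x : Pt n) : Gmet A x * Ginv A x = 1 := by
  ext a b
  rw [Matrix.mul_apply, sum_decomp]
  rcases cases5 a with ha | ha | ⟨i, ha⟩ | ha | ha <;>
    rcases cases5 b with hb | hb | ⟨j, hb⟩ | hb | hb <;>
      subst ha hb <;>
      simp [Matrix.one_apply, mul_neg, pow_two] <;>
      ring

lemma Gmet_inv (x : Pt n) : (Gmet A x)⁻¹ = Ginv A x :=
  Matrix.inv_eq_right_inv (Gmet_mul_Ginv A x)

/-! #### Derivatives -/

/-- The coordinate projection as a continuous linear map. -/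
abbrev CLMproj (a : Fin (n + 4)) : Pt n →L[ℝ] ℝ :=
  ContinuousLinearMap.proj (R := ℝ) (φ := fun _ : Fin (n + 4) => ℝ) a

lemma hasFDerivAt_coord (a : Fin (n + 4)) (x : Pt n) :
    HasFDerivAt (fun y : Pt n => y a) (CLMproj a) x :=
  (CLMproj a).hasFDerivAt

lemma hasFDerivAt_coord_pow (a : Fin (n + 4)) (m : ℕ) (x : Pt n) :
    HasFDerivAt (fun y : Pt n => y a ^ m)
      (((m : ℝ) * x a ^ (m - 1)) • CLMproj a) x :=
  (hasDerivAt_pow m (x a)).comp_hasFDerivAt x (hasFDerivAt_coord a x)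

@[simp] lemma pd_const (b : Fin (n + 4)) (c : ℝ) (x : Pt n) :
    pd b (fun _ : Pt n => c) x = 0 := by
  simp [pd]

lemma hasFDerivAt_Fq (x : Pt n) :
    HasFDerivAt (Fq n)
      (∑ i : Fin n, ((2 : ℝ) * x (ehat i) ^ (2 - 1)) •
        CLMproj (ehat i)) x := by
  unfold Fq
  exact HasFDerivAt.fun_sum fun i _ => by exact_mod_cast hasFDerivAt_coord_pow (ehat i) 2 x

lemma pd_Fq_ehat (i : Fin n) (x : Pt n) : pd (ehat i) (Fq n) x = 2 * x (ehat i) := by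
  rw [pd, (hasFDerivAt_Fq x).fderiv]
  simp only [ContinuousLinearMap.coe_sum', Finset.sum_apply, ContinuousLinearMap.coe_smul',
    Pi.smul_apply, ContinuousLinearMap.proj_apply, smul_eq_mul, Pi.single_apply]
  rw [Finset.sum_eq_single i]
  · simp
  · intro j _ hj
    simp [ehat_inj, hj]
  · simp

lemma pd_Fq_zero (b : Fin (n + 4)) (hb : ∀ j : Fin n, b ≠ ehat j) (x : Pt n) :
    pd b (Fq n) x = 0 := by
  rw [pd, (hasFDerivAt_Fq x).fderiv]
  simp only [ContinuousLinearMap.coe_sum', Finset.sum_apply, ContinuousLinearMap.coe_smul',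
    Pi.smul_apply, ContinuousLinearMap.proj_apply, smul_eq_mul, Pi.single_apply]
  exact Finset.sum_eq_zero fun j _ => by simp [hb j, Ne.symm (hb j)]

variable {A}

lemma hasFDerivAt_u (i : Fin n) (x : Pt n) :
    HasFDerivAt (u A i)
      (∑ j : Fin n, ∑ α : Fin N,
        ((A α i j * x (ehat j)) • ((((α.1 + 1 : ℕ) : ℝ) * x (q1 n) ^ (α.1 + 1 - 1)) •
            CLMproj (q1 n))
          + (x (q1 n) ^ (α.1 + 1)) • ((A α i j) •
            CLMproj (ehat j)))) x := by
  unfold u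
  exact HasFDerivAt.fun_sum fun j _ => HasFDerivAt.fun_sum fun α _ =>
    ((hasFDerivAt_coord (ehat j) x).const_mul _).mul (hasFDerivAt_coord_pow (q1 n) _ x)

lemma pd_u_ehat (i k : Fin n) (x : Pt n) :
    pd (ehat k) (u A i) x = ∑ α : Fin N, A α i k * x (q1 n) ^ (α.1 + 1) := by
  rw [pd, (hasFDerivAt_u i x).fderiv]
  simp only [ContinuousLinearMap.coe_sum', Finset.sum_apply, ContinuousLinearMap.add_apply,
    ContinuousLinearMap.coe_smul', Pi.smul_apply, ContinuousLinearMap.proj_apply,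
    smul_eq_mul, Pi.single_apply]
  rw [Finset.sum_eq_single k]
  · exact Finset.sum_congr rfl fun α _ => by simp [q1_ne_ehat]; ring
  · intro j _ hj
    exact Finset.sum_eq_zero fun α _ => by simp [q1_ne_ehat, ehat_inj, hj]
  · simp

lemma pd_u_zero (i : Fin n) (b : Fin (n + 4)) (hb1 : ∀ j : Fin n, b ≠ ehat j)
    (hb2 : b ≠ q1 n) (x : Pt n) : pd b (u A i) x = 0 := by
  rw [pd, (hasFDerivAt_u i x).fderiv]
  simp only [ContinuousLinearMap.coe_sum', Finset.sum_apply, ContinuousLinearMap.add_apply,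
    ContinuousLinearMap.coe_smul', Pi.smul_apply, ContinuousLinearMap.proj_apply,
    smul_eq_mul, Pi.single_apply]
  exact Finset.sum_eq_zero fun j _ => Finset.sum_eq_zero fun α _ => by
    simp [Ne.symm (hb1 j), Ne.symm hb2]

/-! #### The Christoffel symbols with upper index `î` -/

lemma Gamma_ehat (i : Fin n) (b c : Fin (n + 4)) (x : Pt n) :
    Γchr A (ehat i) b c x = (1 / 2) *
      ((pd b (fun y => Gmet A y (ehat i) c) x + pd c (fun y => Gmet A y b (ehat i)) x
          - pd (ehat i) (fun y => Gmet A y b c) x)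
        - u A i x *
          (pd b (fun y => Gmet A y (p2 n) c) x + pd c (fun y => Gmet A y b (p2 n)) x
            - pd (p2 n) (fun y => Gmet A y b c) x)) := by
  rw [Γchr, Gmet_inv, sum_decomp]
  simp only [Ginv_ehat_p1, Ginv_ehat_p2, Ginv_ehat_ehat, Ginv_ehat_q1, Ginv_ehat_q2,
    zero_mul, add_zero, zero_add, ite_mul, one_mul]
  rw [Finset.sum_ite_eq]
  simp only [Finset.mem_univ, if_true]
  ring

end Aux

/-- `Γ^î_{ĵ,n+4}(x) = Σ_α (A_α)_{î−2,ĵ−2} (x^{n+3})^α` and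
`Γ^î_{n+3,n+3}(x) = Γ^î_{n+4,n+4}(x) = −x^î`. -/
theorem statement5 (n N : ℕ) (hn : 1 ≤ n) (hN : 1 ≤ N)
    (A : Fin N → Matrix (Fin n) (Fin n) ℝ) (hA : ∀ α, (A α)ᵀ = -A α) :
    (∀ (i j : Fin n) (x : Pt n),
      Γchr A (ehat i) (ehat j) (q2 n) x = ∑ α : Fin N, A α i j * x (q1 n) ^ (α.1 + 1)) ∧
    (∀ (i : Fin n) (x : Pt n),
      Γchr A (ehat i) (q1 n) (q1 n) x = -x (ehat i) ∧
      Γchr A (ehat i) (q2 n) (q2 n) x = -x (ehat i)) := by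
  have hskew : ∀ (α : Fin N) (a b : Fin n), A α b a = -(A α a b) := fun α a b => by
    have := congrFun (congrFun (hA α) a) b
    simpa [Matrix.transpose_apply] using this
  refine ⟨?_, ?_⟩
  · intro i j x
    rw [Gamma_ehat]
    simp only [Gmet_ehat_q2, Gmet_ehat_ehat, Gmet_p2_q2, Gmet_ehat_p2, pd_const,
      pd_u_ehat, pd_u_zero _ (p2 n) (fun k => p2_ne_ehat k) p2_ne_q1 x]
    have hs : (∑ α : Fin N, A α j i * x (q1 n) ^ (α.1 + 1))
        = -∑ α : Fin N, A α i j * x (q1 n) ^ (α.1 + 1) := by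
      rw [← Finset.sum_neg_distrib]
      exact Finset.sum_congr rfl fun α _ => by rw [hskew α i j]; ring
    rw [hs]
    ring
  · intro i x
    constructor
    · rw [Gamma_ehat]
      simp only [Gmet_ehat_q1, Gmet_q1_ehat, Gmet_q1_q1, Gmet_p2_q1, Gmet_q1_p2, pd_const,
        pd_Fq_ehat, pd_Fq_zero (p2 n) (fun j => p2_ne_ehat j) x]
      ring
    · rw [Gamma_ehat]
      simp only [Gmet_ehat_q2, Gmet_q2_ehat, Gmet_q2_q2, Gmet_p2_q2, Gmet_q2_p2, pd_const,
        pd_Fq_ehat, pd_Fq_zero (p2 n) (fun j => p2_ne_ehat j) x,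
        pd_u_zero _ (q2 n) (fun j => q2_ne_ehat j) q2_ne_q1 x]
      ring

end
end HolPaper
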